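/- arXiv:1807.07266 — 6 statements merged into one kernel-verified Lean document; each statement's English description precedes it below -/
import Mathlib

section
/- Let n > 1 be an integer with prime factorization n = p₁^{k₁}⋯p_r^{k_r} (the p_i distinct primes, k_i ≥ 1). Let V be a multiset of integers such that every element of V is coprime to n and no nonempty sub-multiset of V has product congruent to 1 modulo n. Then the multiset obtained from V by adjoining, for each i ∈ [1,r], exactly k_i − 1 copies of p_i, has no nonempty sub-multiset whose product is idempotent modulo n. -/
/-- Let `n > 1` with prime factorization `n = ∏ i, p i ^ k i` (the `p i` distinct primes,
`k i ≥ 1`).  If `V` is a multiset of integers, each coprime to `n`, such that no nonempty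
sub-multiset of `V` has product `≡ 1 (mod n)`, then the multiset obtained from `V` by
adjoining `k i - 1` copies of `p i` for each `i` has no nonempty sub-multiset whose product
is idempotent modulo `n`. -/
theorem stmt_1 (n : ℕ) (hn : 1 < n) (r : ℕ) (p : Fin r → ℕ) (k : Fin r → ℕ)
    (hp : ∀ i, (p i).Prime) (hinj : Function.Injective p) (hk : ∀ i, 1 ≤ k i)
    (hfac : n = ∏ i, p i ^ k i)
    (V : Multiset ℤ)
    (hcop : ∀ a ∈ V, IsCoprime a (n : ℤ))
    (hfree : ∀ W : Multiset ℤ, W ≤ V → W ≠ 0 → ¬ W.prod ≡ 1 [ZMOD (n : ℤ)]) :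
    ∀ W : Multiset ℤ,
      W ≤ V + (Finset.univ : Finset (Fin r)).sum
            (fun i => Multiset.replicate (k i - 1) ((p i : ℤ))) →
      W ≠ 0 → ¬ W.prod ^ 2 ≡ W.prod [ZMOD (n : ℤ)] := by
  intro W hW hW0 hidem
  set P : Multiset ℤ := (Finset.univ : Finset (Fin r)).sum
      (fun i => Multiset.replicate (k i - 1) ((p i : ℤ))) with hPdef
  set B : Multiset ℤ := W - V with hBdef
  have hBP : B ≤ P := Multiset.sub_le_iff_le_add.2 (by rwa [add_comm] at hW)
  set A : Multiset ℤ := W - B with hAdef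
  have hBW : B ≤ W := tsub_le_self
  have hWAB : A + B = W := tsub_add_cancel_of_le hBW
  have hA : A ≤ V := by
    rw [Multiset.le_iff_count]
    intro x
    have h1 := Multiset.count_le_of_le x hW
    rw [Multiset.count_add] at h1
    rw [hAdef, Multiset.count_sub, hBdef, Multiset.count_sub]
    omega
  -- cast injectivity of p into ℤ
  have hinjZ : ∀ i j : Fin r, ((p i : ℤ)) = ((p j : ℤ)) → i = j := by
    intro i j h
    exact hinj (by exact_mod_cast h)
  -- counts in P
  have hPcount : ∀ i, P.count ((p i : ℤ)) = k i - 1 := by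
    intro i
    rw [hPdef, Multiset.count_sum']
    rw [Finset.sum_eq_single i]
    · simp [Multiset.count_replicate]
    · intro j _ hj
      rw [Multiset.count_replicate, if_neg (fun h => hj (hinjZ j i h))]
    · simp
  have hm : ∀ i, B.count ((p i : ℤ)) ≤ k i - 1 := fun i =>
    (hPcount i) ▸ Multiset.count_le_of_le _ hBP
  -- B is determined by its counts at the p i
  have hBeq : B = ∑ i : Fin r, Multiset.replicate (B.count ((p i : ℤ))) ((p i : ℤ)) := by
    ext x
    rw [Multiset.count_sum']
    by_cases hx : ∃ i, ((p i : ℤ)) = x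
    · obtain ⟨i, rfl⟩ := hx
      rw [Finset.sum_eq_single i]
      · simp [Multiset.count_replicate]
      · intro j _ hj
        rw [Multiset.count_replicate, if_neg (fun h => hj (hinjZ j i h))]
      · simp
    · push_neg at hx
      have h2 : P.count x = 0 := by
        rw [hPdef, Multiset.count_sum']
        exact Finset.sum_eq_zero fun j _ => by
          rw [Multiset.count_replicate, if_neg (hx j)]
      have h1 : B.count x = 0 :=
        Nat.le_zero.1 (h2 ▸ Multiset.count_le_of_le x hBP)
      rw [h1]
      exact (Finset.sum_eq_zero fun j _ => by
        rw [Multiset.count_replicate, if_neg (hx j)]).symm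
  -- product decomposition
  have hBprod : B.prod = ∏ i : Fin r, ((p i : ℤ)) ^ (B.count ((p i : ℤ))) := by
    conv_lhs => rw [hBeq]
    rw [Multiset.prod_sum]
    simp [Multiset.prod_replicate]
  have hxprod : W.prod = A.prod * B.prod := by
    rw [← hWAB, Multiset.prod_add]
  -- coprimality of A.prod
  have hcopA : ∀ M : Multiset ℤ, (∀ a ∈ M, IsCoprime a (n : ℤ)) → IsCoprime M.prod (n : ℤ) := by
    intro M
    induction M using Multiset.induction with
    | empty => intro _; simpa using isCoprime_one_left
    | cons a s ih =>
      intro h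
      rw [Multiset.prod_cons]
      exact (h a (Multiset.mem_cons_self a s)).mul_left
        (ih fun b hb => h b (Multiset.mem_cons_of_mem hb))
  have ha : IsCoprime A.prod (n : ℤ) :=
    hcopA A fun a haA => hcop a (Multiset.mem_of_le hA haA)
  -- divisibility from idempotency
  have hdvd : (n : ℤ) ∣ W.prod * (W.prod - 1) := by
    have := hidem.dvd
    have heq : W.prod * (W.prod - 1) = -(W.prod - W.prod ^ 2) := by ring
    rw [heq]
    exact dvd_neg.2 this
  have hnz : (n : ℤ) ≠ 0 := by exact_mod_cast (by omega : n ≠ 0)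
  -- each count is zero
  have hm0 : ∀ i, B.count ((p i : ℤ)) = 0 := by
    intro i
    by_contra hne
    set m := B.count ((p i : ℤ)) with hmdef
    have hm1 : 1 ≤ m := Nat.one_le_iff_ne_zero.2 hne
    have hpZ : Prime ((p i : ℤ)) := Nat.prime_iff_prime_int.1 (hp i)
    -- p i ^ (m+1) ∣ n
    have hpk : ((p i : ℤ)) ^ (m + 1) ∣ (n : ℤ) := by
      have h1 : (p i) ^ (k i) ∣ n := hfac ▸ Finset.dvd_prod_of_mem _ (Finset.mem_univ i)
      have h2 : m + 1 ≤ k i := by have := hm i; have := hk i; omega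
      calc ((p i : ℤ)) ^ (m + 1) ∣ ((p i : ℤ)) ^ (k i) := pow_dvd_pow _ h2
        _ ∣ (n : ℤ) := by exact_mod_cast Int.natCast_dvd_natCast.2 h1
    -- factor B.prod
    set c : ℤ := ∏ j ∈ Finset.univ.erase i, ((p j : ℤ)) ^ (B.count ((p j : ℤ))) with hcdef
    have hbfac : B.prod = ((p i : ℤ)) ^ m * c := by
      rw [hBprod, hmdef, hcdef]
      exact (Finset.mul_prod_erase Finset.univ
        (fun j => ((p j : ℤ)) ^ (B.count ((p j : ℤ)))) (Finset.mem_univ i)).symm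
    -- p i ∤ A.prod
    have hpa : ¬ ((p i : ℤ)) ∣ A.prod := fun h =>
      hpZ.not_unit (ha.isUnit_of_dvd' h (Int.natCast_dvd_natCast.2
        (hfac ▸ dvd_trans (dvd_pow_self _ (by have := hk i; omega)) (Finset.dvd_prod_of_mem _ (Finset.mem_univ i)))))
    -- p i ∤ c
    have hpc : ¬ ((p i : ℤ)) ∣ c := by
      intro h
      obtain ⟨j, hj, hdj⟩ := (hpZ.dvd_finset_prod_iff _).1 h
      have hdj2 : ((p i : ℤ)) ∣ ((p j : ℤ)) := hpZ.dvd_of_dvd_pow hdj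
      have : p i = p j := (Nat.prime_dvd_prime_iff_eq (hp i) (hp j)).1 (Int.natCast_dvd_natCast.1 hdj2)
      exact (Finset.mem_erase.1 hj).1 (hinj this).symm
    -- p i ∣ W.prod
    have hpx : ((p i : ℤ)) ∣ W.prod := by
      rw [hxprod, hbfac]
      exact Dvd.dvd.mul_left (Dvd.dvd.mul_right (dvd_pow_self _ (by omega)) c) A.prod
    have hpx1 : ¬ ((p i : ℤ)) ∣ (W.prod - 1) := by
      intro h
      have h1 : ((p i : ℤ)) ∣ 1 := by simpa using dvd_sub hpx h
      exact hpZ.not_unit (isUnit_of_dvd_one h1)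
    have hdx : ((p i : ℤ)) ^ (m + 1) ∣ W.prod :=
      hpZ.pow_dvd_of_dvd_mul_right _ hpx1 (dvd_trans hpk hdvd)
    -- but valuation of W.prod at p i is exactly m
    have : ((p i : ℤ)) ∣ A.prod * c := by
      have h1 : ((p i : ℤ)) ^ (m + 1) ∣ ((p i : ℤ)) ^ m * (A.prod * c) := by
        rw [hxprod, hbfac] at hdx
        calc ((p i : ℤ)) ^ (m+1) ∣ A.prod * (((p i : ℤ)) ^ m * c) := hdx
          _ = ((p i : ℤ)) ^ m * (A.prod * c) := by ring
      rw [pow_succ, mul_comm (((p i : ℤ)) ^ m) ((p i : ℤ))] at h1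
      exact (mul_dvd_mul_iff_right (pow_ne_zero m hpZ.ne_zero)).1
        (by rwa [mul_comm (((p i : ℤ)) ^ m) (A.prod * c)] at h1)
    rcases hpZ.dvd_mul.1 this with h | h
    · exact hpa h
    · exact hpc h
  -- hence B = 0 and W = A
  have hB0 : B = 0 := by
    rw [hBeq]
    exact Finset.sum_eq_zero fun i _ => by rw [hm0 i, Multiset.replicate_zero]
  have hWA : W = A := by rw [← hWAB, hB0, add_zero]
  -- W.prod ≡ 1 mod n
  have hcx : IsCoprime W.prod (n : ℤ) := hWA ▸ ha
  have hnd : (n : ℤ) ∣ W.prod - 1 :=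
    hcx.symm.dvd_of_dvd_mul_left hdvd
  have : W.prod ≡ 1 [ZMOD (n : ℤ)] := (Int.modEq_iff_dvd.2 hnd).symm
  exact hfree W (hWA ▸ hA) hW0 this
end

section
/- Let n > 1 be an integer, let R = ℤ/nℤ, and let R^× be its group of units. Let D be a positive integer such that there exists a multiset over R^× of cardinality D − 1 having no nonempty sub-multiset with product 1 (i.e., D − 1 is less than the Davenport constant of R^×). Then there exists a multiset over R of cardinality D − 1 + Ω(n) − ω(n) having no nonempty sub-multiset whose product is an idempotent of R; consequently the n-modular Erdős–Burgess constant is at least D + Ω(n) − ω(n). -/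
/-!
Take a multiset `S` of units without a nonempty product-one subsequence and adjoin, for every
prime `p ∣ n`, the residue `p` with multiplicity `v_p(n) - 1`. A subsequence has product `u * m`
with `u` a unit and `m` a product of these primes. If `u * m` is idempotent then
`m = u ^ k * m ^ (k + 1)` for every `k`, so each prime `p ∣ m` forces `p ^ v_p(n) ∣ m`; this is
impossible since `m` divides `n / rad n`. Hence `m = 1`, and then `u` is an idempotent unit,
i.e. `u = 1`, which `S` excludes. The lower bound for the Erdős–Burgess constant follows because
that constant is finite for the finite monoid `ℤ/nℤ`.
-/

/-- The `n`-modular Erdős–Burgess constant: the smallest positive integer `ℓ` such that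
every multiset over `ℤ/nℤ` of cardinality `ℓ` has a nonempty sub-multiset whose product is
idempotent. -/
noncomputable def modularErdosBurgess (n : ℕ) : ℕ :=
  sInf {ℓ : ℕ | 0 < ℓ ∧ ∀ T : Multiset (ZMod n), T.card = ℓ →
    ∃ W : Multiset (ZMod n), W ≤ T ∧ W ≠ 0 ∧ W.prod * W.prod = W.prod}

namespace Multiset

variable {α β : Type*}

theorem exists_le_map_eq_of_le_map {f : α → β} {W : Multiset β} {S : Multiset α}
    (h : W ≤ S.map f) : ∃ V ≤ S, V.map f = W := by
  induction S using Quotient.inductionOn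
  induction W using Quotient.inductionOn
  obtain ⟨l, hperm, hsub⟩ := h
  obtain ⟨l', hl', rfl⟩ := List.sublist_map_iff.mp hsub
  exact ⟨l', hl'.subperm, Quot.sound hperm⟩

theorem exists_le_le_eq_add_of_le_add {W A B : Multiset α} (h : W ≤ A + B) :
    ∃ W₁ ≤ A, ∃ W₂ ≤ B, W = W₁ + W₂ := by
  induction A using Quotient.inductionOn
  induction B using Quotient.inductionOn
  induction W using Quotient.inductionOn
  obtain ⟨l, hperm, hsub⟩ := h
  obtain ⟨l₁, l₂, rfl, h₁, h₂⟩ := List.sublist_append_iff.mp hsub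
  exact ⟨l₁, h₁.subperm, l₂, h₂.subperm, (Quot.sound hperm).symm⟩

theorem exists_le_card_eq {s : Multiset α} {n : ℕ} (h : n ≤ card s) : ∃ t ≤ s, card t = n := by
  obtain ⟨t, ht⟩ := card_pos_iff_exists_mem.mp
    (by rw [card_powersetCard]; exact Nat.choose_pos h)
  exact ⟨t, mem_powersetCard.mp ht⟩

end Multiset

theorem exists_pos_isIdempotentElem_pow {M : Type*} [Monoid M] [Finite M] (x : M) :
    ∃ k, 0 < k ∧ IsIdempotentElem (x ^ k) := by
  obtain ⟨i, j, hij, hx⟩ := Finite.exists_ne_map_eq_of_infinite (x ^ · : ℕ → M)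
  wlog hlt : i < j generalizing i j
  · exact this j i hij.symm hx.symm (by omega)
  obtain ⟨d, rfl⟩ := Nat.exists_eq_add_of_lt hlt
  -- from exponent `i` on, the powers of `x` are periodic with period `d + 1`
  have hperiod : ∀ s t, x ^ (i + s + t * (d + 1)) = x ^ (i + s) := by
    intro s t
    induction t with
    | zero => simp
    | succ t ih =>
      rw [← ih, show i + s + (t + 1) * (d + 1) = i + d + 1 + (s + t * (d + 1)) by ring,
        pow_add, ← hx, ← pow_add]
      ring_nf
  refine ⟨(i + 1) * (d + 1), by positivity, ?_⟩
  rw [IsIdempotentElem, ← pow_add]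
  simpa [show (i + 1) * (d + 1) = i + (i * d + d + 1) by ring, add_assoc] using
    hperiod (i * d + d + 1) (i + 1)

def IsIdempotentProductFree {M : Type*} [CommMonoid M] (T : Multiset M) : Prop :=
  ∀ W ≤ T, W ≠ 0 → ¬IsIdempotentElem W.prod

theorem exists_forall_card_eq_exists_isIdempotentElem_prod (M : Type*) [CommMonoid M]
    [Fintype M] : ∃ ℓ, 0 < ℓ ∧ ∀ T : Multiset M, T.card = ℓ →
      ∃ W ≤ T, W ≠ 0 ∧ IsIdempotentElem W.prod := by
  classical
  choose k hk_pos hk_idem using exists_pos_isIdempotentElem_pow (M := M)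
  refine ⟨∑ x, k x, Finset.sum_pos (fun x _ ↦ hk_pos x) Finset.univ_nonempty, fun T hT ↦ ?_⟩
  obtain ⟨x, -, hx⟩ : ∃ x ∈ Finset.univ, k x ≤ T.count x :=
    Finset.exists_le_of_sum_le Finset.univ_nonempty
      (by rw [Multiset.sum_count_eq_card (fun _ _ ↦ Finset.mem_univ _), hT])
  refine ⟨.replicate (k x) x, Multiset.le_count_iff_replicate_le.mp hx, ?_, ?_⟩
  · exact Multiset.card_pos.mp ((Multiset.card_replicate _ x).symm ▸ hk_pos x)
  · rw [Multiset.prod_replicate]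
    exact hk_idem x

theorem lt_modularErdosBurgess {n : ℕ} [NeZero n] {T : Multiset (ZMod n)}
    (hT : IsIdempotentProductFree T) : T.card < modularErdosBurgess n := by
  refine le_csInf (exists_forall_card_eq_exists_isIdempotentElem_prod (ZMod n)) ?_
  rintro ℓ ⟨-, hℓ⟩
  by_contra! hle
  obtain ⟨t, htT, rfl⟩ := Multiset.exists_le_card_eq (Nat.le_of_lt_succ hle)
  obtain ⟨W, hWt, hW0, hW⟩ := hℓ t rfl
  exact hT W (hWt.trans htT) hW0 hW

namespace Nat

/-- Every prime `p ∣ n` with multiplicity `v_p(n) - 1`. -/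
def excessPrimeFactors (n : ℕ) : Multiset ℕ := ↑n.primeFactorsList - n.primeFactors.val

theorem val_primeFactors_le_primeFactorsList (n : ℕ) :
    n.primeFactors.val ≤ ↑n.primeFactorsList := by
  rw [Nat.primeFactors, List.toFinset_val]
  exact Multiset.dedup_le _

theorem card_excessPrimeFactors_add_card_primeFactors (n : ℕ) :
    n.excessPrimeFactors.card + n.primeFactors.card = n.primeFactorsList.length := by
  rw [excessPrimeFactors, Finset.card_def, ← Multiset.card_add,
    tsub_add_cancel_of_le (val_primeFactors_le_primeFactorsList n), Multiset.coe_card]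

theorem prod_excessPrimeFactors_mul_prod_primeFactors {n : ℕ} (hn : n ≠ 0) :
    n.excessPrimeFactors.prod * ∏ p ∈ n.primeFactors, p = n := by
  rw [Finset.prod_eq_multiset_prod, Multiset.map_id', ← Multiset.prod_add, excessPrimeFactors,
    tsub_add_cancel_of_le (val_primeFactors_le_primeFactorsList n), Multiset.prod_coe,
    prod_primeFactorsList hn]

theorem mem_primeFactors_of_mem_excessPrimeFactors {n p : ℕ} (h : p ∈ n.excessPrimeFactors) :
    p ∈ n.primeFactors :=
  List.mem_toFinset.mpr (Multiset.mem_of_le tsub_le_self h)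

end Nat

namespace ZMod

theorem natCast_eq_unit_pow_mul_pow_of_isIdempotentElem {n m : ℕ} {u : (ZMod n)ˣ}
    (h : IsIdempotentElem ((u : ZMod n) * m)) (k : ℕ) :
    (m : ZMod n) = ↑(u ^ k) * m ^ (k + 1) := by
  calc (m : ZMod n) = ↑u⁻¹ * (u * m) := (Units.inv_mul_cancel_left u _).symm
    _ = ↑u⁻¹ * (u * m) ^ (k + 1) := by rw [h.pow_succ_eq]
    _ = ↑u⁻¹ * (u * (↑(u ^ k) * m ^ (k + 1))) := by push_cast; ring
    _ = ↑(u ^ k) * m ^ (k + 1) := Units.inv_mul_cancel_left u _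

theorem pow_factorization_dvd_of_isIdempotentElem {n m p : ℕ} {u : (ZMod n)ˣ}
    (h : IsIdempotentElem ((u : ZMod n) * m)) (hpm : p ∣ m) : p ^ n.factorization p ∣ m := by
  set e := n.factorization p
  have hm := congrArg (castHom (Nat.ordProj_dvd n p) (ZMod (p ^ e)))
    (natCast_eq_unit_pow_mul_pow_of_isIdempotentElem h e)
  have hpow : ((m ^ (e + 1) : ℕ) : ZMod (p ^ e)) = 0 :=
    (natCast_eq_zero_iff _ _).mpr ((pow_dvd_pow_of_dvd hpm e).mul_right m)
  rw [map_natCast, map_mul, map_pow, map_natCast, ← Nat.cast_pow, hpow, mul_zero] at hm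
  exact (natCast_eq_zero_iff _ _).mp hm

end ZMod

theorem eq_zero_of_le_excessPrimeFactors_of_isIdempotentElem {n : ℕ} (hn : n ≠ 0)
    {N : Multiset ℕ} (hN : N ≤ n.excessPrimeFactors) {u : (ZMod n)ˣ}
    (h : IsIdempotentElem ((u : ZMod n) * (N.prod : ℕ))) : N = 0 := by
  refine Multiset.eq_zero_of_forall_notMem fun p hp ↦ ?_
  have hpn := Nat.mem_primeFactors_of_mem_excessPrimeFactors (Multiset.mem_of_le hN hp)
  refine Nat.pow_succ_factorization_not_dvd hn (Nat.prime_of_mem_primeFactors hpn) ?_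
  calc p ^ (n.factorization p + 1) = p ^ n.factorization p * p := pow_succ _ _
    _ ∣ n.excessPrimeFactors.prod * ∏ q ∈ n.primeFactors, q :=
      mul_dvd_mul ((ZMod.pow_factorization_dvd_of_isIdempotentElem h
        (Multiset.dvd_prod hp)).trans (Multiset.prod_dvd_prod_of_le hN))
        (Finset.dvd_prod_of_mem _ hpn)
    _ = n := Nat.prod_excessPrimeFactors_mul_prod_primeFactors hn

theorem isIdempotentProductFree_map_val_add_map_excessPrimeFactors {n : ℕ} (hn : n ≠ 0)
    {S : Multiset (ZMod n)ˣ} (hS : ∀ W ≤ S, W ≠ 0 → W.prod ≠ 1) :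
    IsIdempotentProductFree
      (S.map Units.val + n.excessPrimeFactors.map (Nat.cast : ℕ → ZMod n)) := by
  intro W hW hW0 hidem
  obtain ⟨_, hW₁, _, hW₂, rfl⟩ := Multiset.exists_le_le_eq_add_of_le_add hW
  obtain ⟨V, hV, rfl⟩ := Multiset.exists_le_map_eq_of_le_map hW₁
  obtain ⟨N, hN, rfl⟩ := Multiset.exists_le_map_eq_of_le_map hW₂
  rw [Multiset.prod_add, ← Nat.cast_multiset_prod,
    show (V.map Units.val).prod = V.prod from (map_multiset_prod (Units.coeHom _) V).symm]
    at hidem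
  obtain rfl := eq_zero_of_le_excessPrimeFactors_of_isIdempotentElem hn hN hidem
  have hV0 : V ≠ 0 := by
    rintro rfl
    simp at hW0
  rw [Multiset.prod_zero, Nat.cast_one, mul_one,
    IsIdempotentElem.iff_eq_one_of_isUnit V.prod.isUnit, Units.val_eq_one] at hidem
  exact hS V hV hV0 hidem

theorem stmt_2_general (n : ℕ) (hn : 1 < n) (D : ℕ)
    (hex : ∃ S : Multiset (ZMod n)ˣ, S.card = D - 1 ∧
      ∀ W : Multiset (ZMod n)ˣ, W ≤ S → W ≠ 0 → W.prod ≠ 1) :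
    (∃ T : Multiset (ZMod n),
        T.card = D - 1 + n.primeFactorsList.length - n.primeFactors.card ∧
        ∀ W : Multiset (ZMod n), W ≤ T → W ≠ 0 → W.prod * W.prod ≠ W.prod) ∧
      D + n.primeFactorsList.length - n.primeFactors.card ≤ modularErdosBurgess n := by
  have : NeZero n := ⟨by omega⟩
  obtain ⟨S, hScard, hS⟩ := hex
  have hT := isIdempotentProductFree_map_val_add_map_excessPrimeFactors (NeZero.ne n) hS
  have hcard := Nat.card_excessPrimeFactors_add_card_primeFactors n
  have hlt := lt_modularErdosBurgess hT
  simp only [Multiset.card_add, Multiset.card_map, hScard] at hlt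
  exact ⟨⟨_, by simp only [Multiset.card_add, Multiset.card_map]; omega, hT⟩, by omega⟩

/-- If there is a multiset over `(ℤ/nℤ)ˣ` of cardinality `D - 1` with no nonempty
sub-multiset of product `1`, then there is a multiset over `ℤ/nℤ` of cardinality
`D - 1 + Ω(n) - ω(n)` with no nonempty sub-multiset of idempotent product; consequently
the `n`-modular Erdős–Burgess constant is at least `D + Ω(n) - ω(n)`. -/
theorem stmt_2 (n : ℕ) (hn : 1 < n) (D : ℕ) (hD : 0 < D)
    (hex : ∃ S : Multiset (ZMod n)ˣ, S.card = D - 1 ∧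
      ∀ W : Multiset (ZMod n)ˣ, W ≤ S → W ≠ 0 → W.prod ≠ 1) :
    (∃ T : Multiset (ZMod n),
        T.card = D - 1 + n.primeFactorsList.length - n.primeFactors.card ∧
        ∀ W : Multiset (ZMod n), W ≤ T → W ≠ 0 → W.prod * W.prod ≠ W.prod) ∧
      D + n.primeFactorsList.length - n.primeFactors.card ≤ modularErdosBurgess n :=
  stmt_2_general n hn D hex
end

section
/- Let n > 1 be a squarefree integer, R = ℤ/nℤ, and R^× its group of units. Let D(R^×) denote the least positive integer ℓ such that every multiset over R^× of cardinality ℓ has a nonempty sub-multiset with product 1, and let I(S_R) denote the least positive integer ℓ such that every multiset over R of cardinality ℓ has a nonempty sub-multiset whose product x satisfies x·x = x. Then I(S_R) = D(R^×). -/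
/-!
Every element `x` of a reduced Artinian ring `R ≅ ∏ Kᵢ` (a product of fields) has a unit
shadow `u x`, equal to `x` in the coordinates where `x` is nonzero and to `1` elsewhere. If a
sequence of shadows multiplies to `1`, then in each coordinate the product of the original
sequence is either `0` (some factor vanishes there) or the product of the shadows, `1`; so it
is idempotent. Hence any length forcing a product-one subsequence in `Rˣ` forces an
idempotent-product subsequence in `R`; the converse holds since the only idempotent unit is `1`.
For squarefree `n`, `ZMod n` is finite and reduced.
-/

/-- The Davenport constant of the unit group `(ℤ/nℤ)ˣ`. -/
noncomputable def davenportUnits (n : ℕ) : ℕ :=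
  sInf {ℓ : ℕ | 0 < ℓ ∧ ∀ T : Multiset (ZMod n)ˣ, T.card = ℓ →
    ∃ W : Multiset (ZMod n)ˣ, W ≤ T ∧ W ≠ 0 ∧ W.prod = 1}

theorem Multiset.exists_le_map_eq_of_le_map_s5 {α β : Type*} (f : α → β) {T : Multiset α}
    {W : Multiset β} (hW : W ≤ T.map f) : ∃ W₀ ≤ T, W₀.map f = W := by
  induction T using Multiset.induction generalizing W with
  | empty => exact ⟨0, le_rfl, (Multiset.le_zero.mp (by simpa using hW)).symm⟩
  | cons a T ih =>
    rw [Multiset.map_cons] at hW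
    by_cases ha : f a ∈ W
    · obtain ⟨W', rfl⟩ := Multiset.exists_cons_of_mem ha
      obtain ⟨W₀, hle, hmap⟩ := ih ((Multiset.cons_le_cons_iff _).mp hW)
      exact ⟨a ::ₘ W₀, Multiset.cons_le_cons _ hle, by rw [Multiset.map_cons, hmap]⟩
    · obtain ⟨W₀, hle, hmap⟩ := ih ((Multiset.le_cons_of_notMem ha).mp hW)
      exact ⟨W₀, hle.trans (Multiset.le_cons_self _ _), hmap⟩

theorem Multiset.isIdempotentElem_prod_of_prod_map_ite_eq_one {M₀ : Type*}
    [CommMonoidWithZero M₀] [DecidableEq M₀] {s : Multiset M₀}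
    (hs : (s.map fun x => if x = 0 then 1 else x).prod = 1) : IsIdempotentElem s.prod := by
  by_cases h0 : (0 : M₀) ∈ s
  · rw [Multiset.prod_eq_zero h0]
    exact IsIdempotentElem.zero
  · have hmap : s.map (fun x => if x = 0 then 1 else x) = s := by
      conv_rhs => rw [← Multiset.map_id' s]
      exact Multiset.map_congr rfl fun x hx => if_neg (ne_of_mem_of_not_mem hx h0)
    rw [← hmap, hs]
    exact IsIdempotentElem.one

variable {M N : Type*} [CommMonoid M] [CommMonoid N]

def DetectsIdempotentProducts (u : M → Mˣ) : Prop :=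
  ∀ W : Multiset M, (W.map u).prod = 1 → IsIdempotentElem W.prod

theorem DetectsIdempotentProducts.comap {u : N → Nˣ} (hu : DetectsIdempotentProducts u)
    (e : M ≃* N) :
    DetectsIdempotentProducts fun x => Units.map e.symm.toMonoidHom (u (e x)) := by
  intro W hW
  have : ((W.map e).map u).prod = 1 := by
    apply Units.map_injective (f := e.symm.toMonoidHom) e.symm.injective
    rw [map_one, ← hW, ← Multiset.prod_hom, Multiset.map_map, Multiset.map_map]
    rfl
  simpa [IsIdempotentElem, ← map_mul, Multiset.prod_hom] using hu _ this

theorem DetectsIdempotentProducts.forall_exists_prod_eq_one_iff {u : M → Mˣ}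
    (hu : DetectsIdempotentProducts u) (ℓ : ℕ) :
    (∀ T : Multiset Mˣ, T.card = ℓ → ∃ W ≤ T, W ≠ 0 ∧ W.prod = 1) ↔
      ∀ T : Multiset M, T.card = ℓ → ∃ W ≤ T, W ≠ 0 ∧ IsIdempotentElem W.prod := by
  constructor
  · intro h T hT
    obtain ⟨W', hW'T, hW'0, hW'⟩ := h (T.map u) (by rw [Multiset.card_map, hT])
    obtain ⟨W, hWT, rfl⟩ := Multiset.exists_le_map_eq_of_le_map_s5 u hW'T
    exact ⟨W, hWT, by simpa using hW'0, hu W hW'⟩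
  · intro h T hT
    obtain ⟨W', hW'T, hW'0, hW'⟩ := h (T.map Units.val) (by rw [Multiset.card_map, hT])
    obtain ⟨W, hWT, rfl⟩ := Multiset.exists_le_map_eq_of_le_map_s5 Units.val hW'T
    refine ⟨W, hWT, by simpa using hW'0, ?_⟩
    have hval : (W.map Units.val).prod = ((W.prod : Mˣ) : M) := W.prod_hom (Units.coeHom M)
    rw [hval] at hW'
    exact Units.val_eq_one.mp ((IsIdempotentElem.iff_eq_one_of_isUnit (Units.isUnit _)).mp hW')

section PiGroupWithZero

variable {ι : Type*} {G : ι → Type*} [∀ i, CommGroupWithZero (G i)]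

open Classical in
noncomputable def Pi.unitReplacingZeros (x : ∀ i, G i) : (∀ i, G i)ˣ :=
  MulEquiv.piUnits.symm fun i => if h : x i = 0 then 1 else Units.mk0 (x i) h

open Classical in
theorem Pi.val_unitReplacingZeros_apply (x : ∀ i, G i) (i : ι) :
    (Pi.unitReplacingZeros x : ∀ i, G i) i = if x i = 0 then 1 else x i := by
  by_cases h : x i = 0 <;> simp [Pi.unitReplacingZeros, h]

theorem Pi.detectsIdempotentProducts_unitReplacingZeros :
    DetectsIdempotentProducts (Pi.unitReplacingZeros (G := G)) := by
  classical
  intro W hW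
  funext i
  rw [Pi.mul_apply, Pi.multiset_prod_apply]
  apply Multiset.isIdempotentElem_prod_of_prod_map_ite_eq_one
  have hWi := congrArg (fun v : (∀ i, G i)ˣ => (v : ∀ i, G i) i) hW
  rw [← Units.coeHom_apply, ← Multiset.prod_hom, Pi.multiset_prod_apply] at hWi
  simpa [Function.comp_def, Pi.val_unitReplacingZeros_apply] using hWi

end PiGroupWithZero

theorem IsArtinianRing.exists_detectsIdempotentProducts (R : Type*) [CommRing R]
    [IsArtinianRing R] [IsReduced R] : ∃ u : R → Rˣ, DetectsIdempotentProducts u := by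
  let (I : MaximalSpectrum R) : Field (R ⧸ I.asIdeal) :=
    have := I.isMaximal
    Ideal.Quotient.field _
  exact ⟨_, Pi.detectsIdempotentProducts_unitReplacingZeros.comap
    (IsArtinianRing.equivPi R).toMulEquiv⟩

theorem stmt_5_general (n : ℕ) (hsf : Squarefree n) :
    modularErdosBurgess n = davenportUnits n := by
  have : NeZero n := ⟨hsf.ne_zero⟩
  have : IsReduced (ZMod n) := isReduced_zmod.mpr (.inl hsf)
  obtain ⟨u, hu⟩ := IsArtinianRing.exists_detectsIdempotentProducts (ZMod n)
  unfold modularErdosBurgess davenportUnits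
  congr 1
  ext ℓ
  exact and_congr_right fun _ => (hu.forall_exists_prod_eq_one_iff ℓ).symm

/-- For squarefree `n > 1`, `I(S_R) = D(Rˣ)`. -/
theorem stmt_5 (n : ℕ) (hn : 1 < n) (hsf : Squarefree n) :
    modularErdosBurgess n = davenportUnits n :=
  stmt_5_general n hsf
end

section
/- Let p be a prime, k ≥ 1, and n = p^k. Let ℓ be a positive integer such that every multiset over (ℤ/nℤ)^× of cardinality ℓ has a nonempty sub-multiset with product 1. Then every multiset over ℤ/nℤ of cardinality ℓ + k − 1 has a nonempty sub-multiset whose product x satisfies x·x = x. -/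
lemma aux_pow_card_dvd_prod {R : Type*} [CommMonoid R] (a : R) (W : Multiset R)
    (h : ∀ x ∈ W, a ∣ x) : a ^ Multiset.card W ∣ W.prod := by
  induction W using Multiset.induction with
  | empty => simp
  | cons x s ih =>
    simp only [Multiset.card_cons, Multiset.prod_cons, pow_succ']
    exact mul_dvd_mul (h x (Multiset.mem_cons_self x s))
      (ih fun y hy => h y (Multiset.mem_cons_of_mem hy))

/-- Let `n = p^k` be a prime power, and let `ℓ > 0` be such that every multiset over
`(ℤ/nℤ)ˣ` of cardinality `ℓ` has a nonempty sub-multiset with product `1`.  Then every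
multiset over `ℤ/nℤ` of cardinality `ℓ + k - 1` has a nonempty sub-multiset with idempotent
product. -/
theorem stmt_6 (p : ℕ) (hp : p.Prime) (k : ℕ) (hk : 1 ≤ k) (ℓ : ℕ) (hℓ : 0 < ℓ)
    (hD : ∀ T : Multiset (ZMod (p ^ k))ˣ, T.card = ℓ →
      ∃ W : Multiset (ZMod (p ^ k))ˣ, W ≤ T ∧ W ≠ 0 ∧ W.prod = 1) :
    ∀ T : Multiset (ZMod (p ^ k)), T.card = ℓ + k - 1 →
      ∃ W : Multiset (ZMod (p ^ k)), W ≤ T ∧ W ≠ 0 ∧ W.prod * W.prod = W.prod := by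
  classical
  intro T hT
  haveI : NeZero (p ^ k) := ⟨pow_ne_zero _ hp.pos.ne'⟩
  set U : Multiset (ZMod (p ^ k)) := T.filter IsUnit with hUdef
  set N : Multiset (ZMod (p ^ k)) := T.filter (fun x => ¬ IsUnit x) with hNdef
  have hcards : Multiset.card U + Multiset.card N = ℓ + k - 1 := by
    rw [← Multiset.card_add, Multiset.filter_add_not, hT]
  by_cases hU : ℓ ≤ Multiset.card U
  · -- enough units: take ℓ of them and use hD
    set S : Multiset (ZMod (p ^ k)) := (↑(U.toList.take ℓ) : Multiset (ZMod (p ^ k))) with hSdef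
    have hSle : S ≤ U := by
      have : (U.toList.take ℓ).Subperm U.toList := (U.toList.take_sublist ℓ).subperm
      simpa [hSdef, Multiset.coe_toList] using (Multiset.coe_le.mpr this).trans_eq
        (Multiset.coe_toList U)
    have hScard : Multiset.card S = ℓ := by
      simp [hSdef, List.length_take]
      omega
    have hmem : ∀ x ∈ S, IsUnit x := fun x hx =>
      Multiset.of_mem_filter (Multiset.mem_of_le hSle hx)
    set T' : Multiset (ZMod (p ^ k))ˣ :=
      S.attach.map (fun x => (hmem x.1 x.2).unit) with hT'def
    have hT'card : Multiset.card T' = ℓ := by simp [hT'def, hScard]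
    obtain ⟨W', hW'le, hW'ne, hW'prod⟩ := hD T' hT'card
    refine ⟨W'.map (Units.coeHom _), ?_, ?_, ?_⟩
    · have h1 : W'.map (Units.coeHom _) ≤ T'.map (Units.coeHom _) :=
        Multiset.map_le_map hW'le
      have h2 : T'.map (Units.coeHom _) = S := by
        simp only [hT'def, Multiset.map_map, Function.comp]
        simpa using Multiset.attach_map_val S
      rw [h2] at h1
      exact h1.trans (hSle.trans (Multiset.filter_le _ _))
    · simpa [Multiset.map_eq_zero] using hW'ne
    · rw [Multiset.prod_hom W' (Units.coeHom (ZMod (p ^ k))), hW'prod]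
      simp
  · -- few units: at least k non-units, whose product is 0
    have hN : k ≤ Multiset.card N := by omega
    set W : Multiset (ZMod (p ^ k)) := (↑(N.toList.take k) : Multiset (ZMod (p ^ k))) with hWdef
    have hWle : W ≤ N := by
      have : (N.toList.take k).Subperm N.toList := (N.toList.take_sublist k).subperm
      simpa [hWdef, Multiset.coe_toList] using (Multiset.coe_le.mpr this).trans_eq
        (Multiset.coe_toList N)
    have hWcard : Multiset.card W = k := by
      simp [hWdef, List.length_take]
      omega
    have hmem : ∀ x ∈ W, ¬ IsUnit x := by
      intro x hx
      have h' := Multiset.mem_of_le hWle hx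
      rw [hNdef, Multiset.mem_filter] at h'
      exact h'.2
    have hdvd : ∀ x ∈ W, (p : ZMod (p ^ k)) ∣ x := by
      intro x hx
      have hx' := hmem x hx
      have hval : ((x.val : ℕ) : ZMod (p ^ k)) = x := ZMod.natCast_zmod_val x
      have hpd : p ∣ x.val := by
        by_contra hnd
        have hcop : Nat.Coprime x.val p := ((Nat.Prime.coprime_iff_not_dvd hp).mpr hnd).symm
        have : IsUnit ((x.val : ℕ) : ZMod (p ^ k)) :=
          (ZMod.isUnit_iff_coprime _ _).mpr (hcop.pow_right k)
        rw [hval] at this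
        exact hx' this
      obtain ⟨c, hc⟩ := hpd
      refine ⟨(c : ZMod (p ^ k)), ?_⟩
      rw [← hval, hc]
      push_cast
      ring
    have hprod : W.prod = 0 := by
      have h0 : (p : ZMod (p ^ k)) ^ k ∣ W.prod := by
        have h1 := aux_pow_card_dvd_prod (p : ZMod (p ^ k)) W hdvd
        rwa [hWcard] at h1
      have : ((p : ZMod (p ^ k))) ^ k = 0 := by
        rw [← Nat.cast_pow, ZMod.natCast_self]
      rw [this, zero_dvd_iff] at h0
      exact h0
    refine ⟨W, hWle.trans (Multiset.filter_le _ _), ?_, ?_⟩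
    · rw [← Multiset.card_pos, hWcard]; omega
    · rw [hprod]; ring
end

section
/- Let n > 1 be a squarefree integer and let ℓ be a positive integer such that every multiset over (ℤ/nℤ)^× of cardinality ℓ has a nonempty sub-multiset with product 1. Then every multiset over ℤ/nℤ of cardinality ℓ has a nonempty sub-multiset whose product x satisfies x·x = x. -/
/-!
For squarefree `n` and `m = φ n`, Fermat's little theorem modulo each prime factor gives
`a ^ (m + 1) = a` for every `a : ZMod n`, so `a ^ m` is an idempotent and `u a = a + 1 - a ^ m`
is a unit (it is `a` where `a ^ m = 1` and `1` where `a = 0`) with `a ^ m * u a = a`.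
A nonempty sub-multiset `W` with `∏ u a = 1` then has `∏ a = ∏ a ^ m * ∏ u a = (∏ a) ^ m`,
and `P = P ^ m` together with `P ^ (m + 1) = P` makes `P` idempotent.
-/

theorem Multiset.exists_le_map_eq_of_le_map_s7 {α β : Type*} {f : α → β} {t : Multiset α}
    {s : Multiset β} (h : s ≤ t.map f) : ∃ w, w ≤ t ∧ w.map f = s := by
  induction s using Multiset.induction generalizing t with
  | empty => exact ⟨0, Multiset.zero_le t, rfl⟩
  | cons b s ih =>
    obtain ⟨a, ha, rfl⟩ := Multiset.mem_map.mp (Multiset.mem_of_le h (Multiset.mem_cons_self b s))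
    obtain ⟨t', rfl⟩ := Multiset.exists_cons_of_mem ha
    rw [Multiset.map_cons] at h
    obtain ⟨w, hw, rfl⟩ := ih ((Multiset.cons_le_cons_iff (f a)).mp h)
    exact ⟨a ::ₘ w, Multiset.cons_le_cons a hw, Multiset.map_cons f a w⟩

theorem pow_succ_eq_self_of_card_sub_one_dvd {K : Type*} [GroupWithZero K] [Fintype K] {m : ℕ}
    (hm : Fintype.card K - 1 ∣ m) (a : K) : a ^ (m + 1) = a := by
  obtain ⟨c, rfl⟩ := hm
  rcases eq_or_ne a 0 with rfl | ha
  · exact zero_pow (Nat.succ_ne_zero _)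
  · rw [pow_succ, pow_mul, FiniteField.pow_card_sub_one_eq_one a ha, one_pow, one_mul]

theorem ZMod.eq_zero_of_forall_castHom_eq_zero {n : ℕ} (hn : Squarefree n) (x : ZMod n)
    (hx : ∀ p, p.Prime → (hp : p ∣ n) → ZMod.castHom hp (ZMod p) x = 0) : x = 0 := by
  have : NeZero n := ⟨hn.ne_zero⟩
  rw [← ZMod.natCast_zmod_val x, ZMod.natCast_eq_zero_iff]
  conv_lhs => rw [← Nat.prod_primeFactors_of_squarefree hn]
  refine Finset.prod_primes_dvd _ (fun p hp => (Nat.prime_of_mem_primeFactors hp).prime)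
    fun p hp => ?_
  have hpn := Nat.dvd_of_mem_primeFactors hp
  rw [← ZMod.natCast_eq_zero_iff, ← hx p (Nat.prime_of_mem_primeFactors hp) hpn,
    ← map_natCast (ZMod.castHom hpn (ZMod p)), ZMod.natCast_zmod_val]

theorem ZMod.pow_totient_succ_of_squarefree {n : ℕ} (hn : Squarefree n) (a : ZMod n) :
    a ^ (n.totient + 1) = a := by
  rw [← sub_eq_zero]
  refine ZMod.eq_zero_of_forall_castHom_eq_zero hn _ fun p hp hpn => ?_
  have := Fact.mk hp
  have hdvd : Fintype.card (ZMod p) - 1 ∣ n.totient := by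
    simpa [ZMod.card, Nat.totient_prime hp] using Nat.totient_dvd_of_dvd hpn
  rw [map_sub, map_pow, pow_succ_eq_self_of_card_sub_one_dvd hdvd, sub_self]

section PowSuccEqSelf

variable {M : Type*} [Monoid M] {m : ℕ} {a : M}

theorem pow_succ_mul_pow_eq_of_pow_succ_eq_self (h : a ^ (m + 1) = a) (k : ℕ) :
    a ^ (k + 1) * a ^ m = a ^ (k + 1) := by
  rw [pow_succ a k, mul_assoc, ← pow_succ', h]

theorem isIdempotentElem_pow_of_pow_succ_eq_self (h : a ^ (m + 1) = a) :
    IsIdempotentElem (a ^ m) := by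
  cases m with
  | zero => rw [pow_zero]; exact IsIdempotentElem.one
  | succ j => exact pow_succ_mul_pow_eq_of_pow_succ_eq_self h j

end PowSuccEqSelf

section PowSuccEqSelfRing

variable {R : Type*} [CommRing R] {m : ℕ} {a : R}

theorem pow_mul_add_one_sub_pow_eq_self (h : a ^ (m + 1) = a) :
    a ^ m * (a + 1 - a ^ m) = a := by
  have he : a ^ m * a ^ m = a ^ m := isIdempotentElem_pow_of_pow_succ_eq_self h
  linear_combination (pow_succ' a m).symm.trans h - he

theorem add_one_sub_pow_pow_succ_of_pow_succ_eq_self (h : a ^ (m + 1) = a) (k : ℕ) :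
    (a + 1 - a ^ m) ^ (k + 1) = a ^ (k + 1) + 1 - a ^ m := by
  induction k with
  | zero => simp
  | succ k ih =>
    have he : a ^ m * a ^ m = a ^ m := isIdempotentElem_pow_of_pow_succ_eq_self h
    have hke := pow_succ_mul_pow_eq_of_pow_succ_eq_self h k
    have hea := pow_succ_mul_pow_eq_of_pow_succ_eq_self h 0
    rw [pow_succ, ih]
    linear_combination -hke - hea + he

theorem isUnit_add_one_sub_pow_of_pow_succ_eq_self (hm : m ≠ 0) (h : a ^ (m + 1) = a) :
    IsUnit (a + 1 - a ^ m) := by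
  refine IsUnit.of_pow_eq_one (n := m) ?_ hm
  obtain ⟨j, rfl⟩ := Nat.exists_eq_succ_of_ne_zero hm
  rw [add_one_sub_pow_pow_succ_of_pow_succ_eq_self h j]
  ring

theorem Multiset.exists_le_isIdempotentElem_prod_of_forall_units {ℓ : ℕ} (hm : m ≠ 0)
    (hR : ∀ a : R, a ^ (m + 1) = a)
    (hD : ∀ T : Multiset Rˣ, T.card = ℓ → ∃ W : Multiset Rˣ, W ≤ T ∧ W ≠ 0 ∧ W.prod = 1)
    (T : Multiset R) (hT : T.card = ℓ) :
    ∃ W : Multiset R, W ≤ T ∧ W ≠ 0 ∧ IsIdempotentElem W.prod := by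
  let u : R → Rˣ := fun a => (isUnit_add_one_sub_pow_of_pow_succ_eq_self hm (hR a)).unit
  obtain ⟨V, hVT, hV0, hV1⟩ := hD (T.map u) (by rw [Multiset.card_map, hT])
  obtain ⟨W, hWT, rfl⟩ := Multiset.exists_le_map_eq_of_le_map_s7 hVT
  refine ⟨W, hWT, fun hW => hV0 (by rw [hW, Multiset.map_zero]), ?_⟩
  have hu : (W.map fun a => (u a : R)).prod = 1 := by
    simpa [map_multiset_prod, Multiset.map_map, Function.comp_def] using
      congrArg (Units.coeHom R) hV1
  have hP : W.prod = W.prod ^ m :=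
    calc W.prod = (W.map fun a => a ^ m * u a).prod := by
          simp [u, pow_mul_add_one_sub_pow_eq_self (hR _)]
      _ = W.prod ^ m := by rw [Multiset.prod_map_mul, hu, mul_one, Multiset.prod_map_pow,
          Multiset.map_id']
  calc W.prod * W.prod = W.prod ^ (m + 1) := by rw [pow_succ', ← hP]
    _ = W.prod := hR _

end PowSuccEqSelfRing

theorem stmt_7_general (n : ℕ) (hsf : Squarefree n) (ℓ : ℕ)
    (hD : ∀ T : Multiset (ZMod n)ˣ, T.card = ℓ →
      ∃ W : Multiset (ZMod n)ˣ, W ≤ T ∧ W ≠ 0 ∧ W.prod = 1) :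
    ∀ T : Multiset (ZMod n), T.card = ℓ →
      ∃ W : Multiset (ZMod n), W ≤ T ∧ W ≠ 0 ∧ W.prod * W.prod = W.prod :=
  Multiset.exists_le_isIdempotentElem_prod_of_forall_units
    (Nat.totient_pos.mpr (Nat.pos_of_ne_zero hsf.ne_zero)).ne'
    (ZMod.pow_totient_succ_of_squarefree hsf) hD

/-- Let `n > 1` be squarefree, and let `ℓ > 0` be such that every multiset over `(ℤ/nℤ)ˣ`
of cardinality `ℓ` has a nonempty sub-multiset with product `1`.  Then every multiset over
`ℤ/nℤ` of cardinality `ℓ` has a nonempty sub-multiset with idempotent product. -/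
theorem stmt_7 (n : ℕ) (hn : 1 < n) (hsf : Squarefree n) (ℓ : ℕ) (hℓ : 0 < ℓ)
    (hD : ∀ T : Multiset (ZMod n)ˣ, T.card = ℓ →
      ∃ W : Multiset (ZMod n)ˣ, W ≤ T ∧ W ≠ 0 ∧ W.prod = 1) :
    ∀ T : Multiset (ZMod n), T.card = ℓ →
      ∃ W : Multiset (ZMod n), W ≤ T ∧ W ≠ 0 ∧ W.prod * W.prod = W.prod :=
  stmt_7_general n hsf ℓ hD
end

section
/- Let n > 1 be a squarefree integer. For each integer a, let a' be an integer satisfying, for every prime p dividing n: a' ≡ 1 (mod p) if a ≡ 0 (mod p), and a' ≡ a (mod p) otherwise (such a' exists by the Chinese Remainder Theorem). Then: (i) gcd(a', n) = 1 for every integer a; and (ii) for every nonempty finite multiset W of integers, if the product of the corresponding integers a' over all a in W is congruent to 1 modulo n, then the product of the elements of W is idempotent modulo n. -/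
/-!
Modulo a prime `p ∣ n` the integer `a'` is `1` or `a` according as `p ∣ a` or not, so it is
never divisible by `p`. If `∏ a' ≡ 1 (mod n)`, then for each such `p` either some `a ∈ W` is
divisible by `p` and `∏ W ≡ 0`, or `∏ W ≡ ∏ a' ≡ 1`; either way `∏ W` is idempotent modulo `p`,
and since `n` is squarefree these congruences combine to one modulo `n`.
-/

theorem Squarefree.natCast_dvd_of_forall_prime_dvd {n : ℕ} (hn : Squarefree n) {m : ℤ}
    (h : ∀ p : ℕ, p.Prime → p ∣ n → (p : ℤ) ∣ m) : (n : ℤ) ∣ m := by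
  rw [Int.natCast_dvd, ← Nat.prod_primeFactors_of_squarefree hn]
  refine Finset.prod_primes_dvd _ (fun p hp => (Nat.prime_of_mem_primeFactors hp).prime)
    fun p hp => Int.natCast_dvd.mp ?_
  exact h p (Nat.prime_of_mem_primeFactors hp) (Nat.dvd_of_mem_primeFactors hp)

theorem Squarefree.intModEq_of_forall_prime {n : ℕ} (hn : Squarefree n) {a b : ℤ}
    (h : ∀ p : ℕ, p.Prime → p ∣ n → a ≡ b [ZMOD p]) : a ≡ b [ZMOD n] :=
  Int.modEq_iff_dvd.mpr <|
    hn.natCast_dvd_of_forall_prime_dvd fun p hp hpn => Int.modEq_iff_dvd.mp (h p hp hpn)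

theorem Int.not_dvd_of_modEq_one_or_self {p a b : ℤ} (hp : ¬IsUnit p)
    (h₁ : p ∣ a → b ≡ 1 [ZMOD p]) (h₂ : ¬p ∣ a → b ≡ a [ZMOD p]) : ¬p ∣ b := by
  by_cases hpa : p ∣ a
  · rwa [(h₁ hpa).dvd_iff, ← isUnit_iff_dvd_one]
  · rwa [(h₂ hpa).dvd_iff]

theorem Int.multisetProd_sq_modEq_self {p : ℤ} {f : ℤ → ℤ} {W : Multiset ℤ}
    (hf : ∀ a ∈ W, ¬p ∣ a → f a ≡ a [ZMOD p]) (h : (W.map f).prod ≡ 1 [ZMOD p]) :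
    W.prod ^ 2 ≡ W.prod [ZMOD p] := by
  by_cases hW : ∃ a ∈ W, p ∣ a
  · obtain ⟨a, ha, hpa⟩ := hW
    have hW0 : W.prod ≡ 0 [ZMOD p] := (hpa.trans (Multiset.dvd_prod ha)).modEq_zero_int
    exact (hW0.pow 2).trans (by simpa using hW0.symm)
  · push Not at hW
    have hW1 : W.prod ≡ 1 [ZMOD p] := by
      simpa using (Int.ModEq.multisetProd_map (g := id) fun a ha => hf a ha (hW a ha)).symm.trans h
    exact (hW1.pow 2).trans (by simpa using hW1.symm)

theorem stmt_8_general (n : ℕ) (hsf : Squarefree n) (f : ℤ → ℤ)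
    (hf : ∀ a : ℤ, ∀ p : ℕ, p.Prime → p ∣ n →
      (((p : ℤ) ∣ a → f a ≡ 1 [ZMOD (p : ℤ)]) ∧ (¬ (p : ℤ) ∣ a → f a ≡ a [ZMOD (p : ℤ)]))) :
    (∀ a : ℤ, Int.gcd (f a) (n : ℤ) = 1) ∧
      ∀ W : Multiset ℤ, W ≠ 0 → (W.map f).prod ≡ 1 [ZMOD (n : ℤ)] →
        W.prod ^ 2 ≡ W.prod [ZMOD (n : ℤ)] := by
  refine ⟨fun a => ?_, fun W _ hW => ?_⟩
  · refine Nat.coprime_of_dvd fun p hp hpf hpn => ?_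
    have hp' : ¬IsUnit (p : ℤ) := (Nat.prime_iff_prime_int.mp hp).not_isUnit
    exact Int.not_dvd_of_modEq_one_or_self hp' (hf a p hp hpn).1 (hf a p hp hpn).2
      (Int.natCast_dvd.mpr hpf)
  · refine hsf.intModEq_of_forall_prime fun p hp hpn => ?_
    exact Int.multisetProd_sq_modEq_self (fun a _ => (hf a p hp hpn).2)
      (hW.of_dvd (Int.natCast_dvd_natCast.mpr hpn))

/-- Let `n > 1` be squarefree and let `f : ℤ → ℤ` assign to each integer `a` an integer
`f a` with `f a ≡ 1 (mod p)` when `p ∣ a` and `f a ≡ a (mod p)` otherwise, for every prime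
`p ∣ n`.  Then (i) `gcd (f a) n = 1` for all `a`, and (ii) for every nonempty multiset `W`
of integers, if `∏_{a ∈ W} f a ≡ 1 (mod n)` then `∏_{a ∈ W} a` is idempotent modulo `n`. -/
theorem stmt_8 (n : ℕ) (hn : 1 < n) (hsf : Squarefree n) (f : ℤ → ℤ)
    (hf : ∀ a : ℤ, ∀ p : ℕ, p.Prime → p ∣ n →
      (((p : ℤ) ∣ a → f a ≡ 1 [ZMOD (p : ℤ)]) ∧ (¬ (p : ℤ) ∣ a → f a ≡ a [ZMOD (p : ℤ)]))) :
    (∀ a : ℤ, Int.gcd (f a) (n : ℤ) = 1) ∧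
      ∀ W : Multiset ℤ, W ≠ 0 → (W.map f).prod ≡ 1 [ZMOD (n : ℤ)] →
        W.prod ^ 2 ≡ W.prod [ZMOD (n : ℤ)] :=
  stmt_8_general n hsf f hf
end
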